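/- Let ρ : (0,1] → ℝ be a nonnegative measurable function such that r ↦ r³ρ(r) is integrable on (0,1) and r ↦ r ρ(r) is integrable on (0,1). Suppose there is r* ∈ (0,1] such that the map r ↦ r ρ(r) is nonincreasing on (0, r*]. Then for every δ > 0 and every k ∈ ℤ² \ {0} with r* δ|k| ≥ π, one has δ² λ_δ(k) ≥ π ∫_{r*/√2}^{r*} r ρ(r) dr. -/

import Mathlib

open Real MeasureTheory

/-- Euclidean norm of a nonzero integer vector `k ∈ ℤ²`. -/
noncomputable def knorm2 (k : ℤ × ℤ) : ℝ :=
  Real.sqrt ((k.1 : ℝ) ^ 2 + (k.2 : ℝ) ^ 2)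

/-- The 2D Fourier symbol of the nonlocal diffusion operator:
`λ_δ(k) = (4/δ²) ∫₀^{π/2} ∫₀¹ r ρ(r) (1 − cos(r δ |k| cos θ)) dr dθ`. -/
noncomputable def lambdaDelta2 (ρ : ℝ → ℝ) (δ κ : ℝ) : ℝ :=
  (4 / δ ^ 2) * ∫ θ in (0:ℝ)..(π / 2), ∫ r in (0:ℝ)..1,
    r * ρ r * (1 - Real.cos (r * δ * κ * Real.cos θ))

/-! Write `g r = r ρ r` and `b = r*/√2`. In a direction with `cos θ ≥ c > 0` the frequency
`a = δ|k| cos θ` is at least `π c / r*`; dropping the inner integral outside `[0, b]` and using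
`g ≥ g b` there (monotonicity) leaves `g b (b - sin (a b) / a) ≥ g b (b - r* / (π c))`.
Integrating this over `θ ∈ [0, π/6]` with `c = cos (π/6)` and over `[π/6, π/4]` with
`c = cos (π/4)` already exceeds `π g b (r* - b) ≥ π ∫_b^{r*} g`, a numerical inequality. -/

open Set

lemma integral_one_sub_cos_mul {a : ℝ} (ha : a ≠ 0) (b : ℝ) :
    ∫ r in (0:ℝ)..b, (1 - cos (r * a)) = b - sin (b * a) / a := by
  rw [intervalIntegral.integral_sub intervalIntegrable_const
      ((by fun_prop : Continuous fun r => cos (r * a)).intervalIntegrable _ _),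
    intervalIntegral.integral_const, intervalIntegral.integral_comp_mul_right cos ha, integral_cos]
  simp only [smul_eq_mul, zero_mul, sin_zero]
  field_simp
  ring

lemma sub_inv_le_integral_one_sub_cos_mul {a : ℝ} (ha : 0 < a) (b : ℝ) :
    b - 1 / a ≤ ∫ r in (0:ℝ)..b, (1 - cos (r * a)) := by
  rw [integral_one_sub_cos_mul ha.ne']
  gcongr
  exact sin_le_one _

lemma mul_sub_inv_le_integral_mul_one_sub_cos {g : ℝ → ℝ} {a b R : ℝ} (ha : 0 < a) (hb : 0 < b)
    (hbR : b ≤ R) (hg : IntervalIntegrable g volume 0 R) (hg_nonneg : ∀ r ∈ Ioc 0 R, 0 ≤ g r)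
    (hanti : AntitoneOn g (Ioc 0 b)) :
    g b * (b - 1 / a) ≤ ∫ r in (0:ℝ)..R, g r * (1 - cos (r * a)) := by
  have hcos : Continuous fun r => 1 - cos (r * a) := by fun_prop
  have hgi : IntervalIntegrable (fun r => g r * (1 - cos (r * a))) volume 0 R :=
    hg.mul_continuousOn hcos.continuousOn
  have hpos : ∀ r, 0 ≤ 1 - cos (r * a) := fun r => sub_nonneg.2 (cos_le_one _)
  calc g b * (b - 1 / a)
      ≤ g b * ∫ r in (0:ℝ)..b, (1 - cos (r * a)) :=
        mul_le_mul_of_nonneg_left (sub_inv_le_integral_one_sub_cos_mul ha b)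
          (hg_nonneg b ⟨hb, hbR⟩)
    _ = ∫ r in (0:ℝ)..b, g b * (1 - cos (r * a)) := (intervalIntegral.integral_const_mul _ _).symm
    _ ≤ ∫ r in (0:ℝ)..b, g r * (1 - cos (r * a)) := by
        refine intervalIntegral.integral_mono_on hb.le ((hcos.const_mul _).intervalIntegrable _ _)
          (hgi.mono_set (uIcc_subset_uIcc_left (mem_uIcc_of_le hb.le hbR))) fun r hr => ?_
        rcases hr.1.eq_or_lt with rfl | hr0
        · simp
        · exact mul_le_mul_of_nonneg_right (hanti ⟨hr0, hr.2⟩ ⟨hb, le_rfl⟩ hr.2) (hpos r)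
    _ ≤ ∫ r in (0:ℝ)..R, g r * (1 - cos (r * a)) :=
        intervalIntegral.integral_mono_interval le_rfl hb.le hbR
          ((ae_restrict_mem measurableSet_Ioc).mono fun r hr =>
            mul_nonneg (hg_nonneg r hr) (hpos r)) hgi


lemma le_integral_mul_one_sub_cos_of_le_cos {g : ℝ → ℝ} {b R rs δ κ c θ : ℝ} (hb : 0 < b)
    (hbR : b ≤ R) (hg : IntervalIntegrable g volume 0 R) (hg_nonneg : ∀ r ∈ Ioc 0 R, 0 ≤ g r)
    (hanti : AntitoneOn g (Ioc 0 b)) (hrs : 0 < rs) (hlarge : π ≤ rs * (δ * κ)) (hc : 0 < c)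
    (hcθ : c ≤ cos θ) :
    g b * (b - rs / (π * c)) ≤ ∫ r in (0:ℝ)..R, g r * (1 - cos (r * δ * κ * cos θ)) := by
  have hδκ : 0 < δ * κ := pos_of_mul_pos_right (pi_pos.trans_le hlarge) hrs.le
  have ha : 0 < δ * κ * cos θ := mul_pos hδκ (hc.trans_le hcθ)
  have hinv : 1 / (δ * κ * cos θ) ≤ rs / (π * c) := by
    rw [div_le_div_iff₀ ha (by positivity)]
    nlinarith [mul_le_mul hlarge hcθ hc.le (by positivity)]
  calc g b * (b - rs / (π * c))
      ≤ g b * (b - 1 / (δ * κ * cos θ)) := by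
        gcongr
        exact hg_nonneg b ⟨hb, hbR⟩
    _ ≤ ∫ r in (0:ℝ)..R, g r * (1 - cos (r * (δ * κ * cos θ))) :=
        mul_sub_inv_le_integral_mul_one_sub_cos ha hb hbR hg hg_nonneg hanti
    _ = ∫ r in (0:ℝ)..R, g r * (1 - cos (r * δ * κ * cos θ)) := by simp only [mul_assoc]

lemma continuous_integral_mul_one_sub_cos {g x : ℝ → ℝ} {R : ℝ}
    (hg : IntervalIntegrable g volume 0 R) (hx : Continuous x) :
    Continuous fun θ => ∫ r in (0:ℝ)..R, g r * (1 - cos (x r * cos θ)) := by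
  refine intervalIntegral.continuous_of_dominated_interval (bound := fun r => 2 * ‖g r‖)
    (fun θ => ?_) (fun θ => ?_) (hg.norm.const_mul 2) (.of_forall fun r _ => by fun_prop)
  · exact (hg.mul_continuousOn (by fun_prop : Continuous fun r => 1 - cos (x r * cos θ)).continuousOn).def'.aestronglyMeasurable
  · refine .of_forall fun r _ => ?_
    rw [norm_mul, mul_comm]
    gcongr
    rw [Real.norm_eq_abs, abs_le]
    constructor <;> linarith [neg_one_le_cos (x r * cos θ), cos_le_one (x r * cos θ)]

lemma integral_mul_one_sub_cos_nonneg {g : ℝ → ℝ} {R : ℝ} (hR : 0 ≤ R)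
    (hg_nonneg : ∀ r ∈ Ioc 0 R, 0 ≤ g r) (x : ℝ → ℝ) :
    0 ≤ ∫ r in (0:ℝ)..R, g r * (1 - cos (x r)) := by
  rw [intervalIntegral.integral_of_le hR]
  exact setIntegral_nonneg measurableSet_Ioc fun r hr =>
    mul_nonneg (hg_nonneg r hr) (sub_nonneg.2 (cos_le_one _))

lemma mul_le_intervalIntegral_of_le {I : ℝ → ℝ} {u v m : ℝ} (huv : u ≤ v)
    (hI : IntervalIntegrable I volume u v) (hm : ∀ θ ∈ Icc u v, m ≤ I θ) :
    (v - u) * m ≤ ∫ θ in u..v, I θ := by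
  simpa using intervalIntegral.integral_mono_on huv intervalIntegrable_const hI hm

lemma integral_le_mul_sub_of_antitoneOn {g : ℝ → ℝ} {a b : ℝ} (hab : a ≤ b)
    (hg : AntitoneOn g (Icc a b)) : ∫ r in a..b, g r ≤ g a * (b - a) := by
  have := intervalIntegral.integral_mono_on hab
    (uIcc_of_le hab ▸ hg).intervalIntegrable (μ := volume) intervalIntegrable_const
    fun r hr => hg ⟨le_rfl, hab⟩ hr hr.1
  simpa [mul_comm] using this

lemma le_integral_zero_pi_div_two_of_le_cos {I m : ℝ → ℝ} (hI : Continuous I)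
    (hI_nonneg : ∀ θ, 0 ≤ I θ) (hm : ∀ c θ, 0 < c → c ≤ cos θ → m c ≤ I θ) :
    π / 6 * m (√3 / 2) + π / 12 * m (√2 / 2) ≤ ∫ θ in (0:ℝ)..π / 2, I θ := by
  have piece : ∀ u v, 0 ≤ u → u ≤ v → v ≤ π → 0 < cos v →
      (v - u) * m (cos v) ≤ ∫ θ in u..v, I θ := fun u v hu huv hv hcos =>
    mul_le_intervalIntegral_of_le huv (hI.intervalIntegrable u v) fun θ hθ =>
      hm _ θ hcos (cos_le_cos_of_nonneg_of_le_pi (hu.trans hθ.1) hv hθ.2)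
  have hπ := pi_pos
  have h₁ := piece 0 (π / 6) le_rfl (by positivity) (by linarith) (by simp [cos_pi_div_six])
  have h₂ := piece (π / 6) (π / 4) (by positivity) (by linarith) (by linarith)
    (by simp [cos_pi_div_four])
  have h₃ := intervalIntegral.integral_nonneg (μ := volume) (by linarith : π / 4 ≤ π / 2)
    fun θ _ => hI_nonneg θ
  rw [cos_pi_div_six, sub_zero] at h₁
  rw [cos_pi_div_four, show π / 4 - π / 6 = π / 12 by ring] at h₂
  rw [← intervalIntegral.integral_add_adjacent_intervals (hI.intervalIntegrable 0 (π / 4))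
      (hI.intervalIntegrable _ _),
    ← intervalIntegral.integral_add_adjacent_intervals (hI.intervalIntegrable 0 (π / 6))
      (hI.intervalIntegrable _ _)]
  linarith

lemma pi_mul_one_sub_inv_sqrt_two_le :
    π * (1 - 1 / √2) ≤
      4 * (π / 6 * (1 / √2 - 1 / (π * (√3 / 2))) + π / 12 * (1 / √2 - 1 / (π * (√2 / 2)))) := by
  have hπ := pi_gt_d2
  have h2 : √2 ^ 2 = 2 := sq_sqrt (by norm_num)
  have h3 : √3 ^ 2 = 3 := sq_sqrt (by norm_num)
  have h2l : (1.4142:ℝ) ≤ √2 := by nlinarith [sqrt_nonneg 2]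
  have h2u : √2 ≤ 1.4143 := by nlinarith [sqrt_nonneg 2]
  have h3l : (1.732:ℝ) ≤ √3 := by nlinarith [sqrt_nonneg 3]
  have hinv2 : (0.7071:ℝ) ≤ 1 / √2 := by rw [le_div_iff₀ (by positivity)]; nlinarith
  have d₁ : 1 / (π * (√3 / 2)) ≤ 0.368 := by rw [div_le_iff₀ (by positivity)]; nlinarith
  have d₂ : 1 / (π * (√2 / 2)) ≤ 0.451 := by rw [div_le_iff₀ (by positivity)]; nlinarith
  nlinarith

theorem lambdaDelta2_bound_largerange_antitone (ρ : ℝ → ℝ)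
    (hnonneg : ∀ r ∈ Set.Ioc (0:ℝ) 1, 0 ≤ ρ r)
    (hint1 : IntervalIntegrable (fun r => r * ρ r) volume 0 1)
    (rs : ℝ) (hrs : rs ∈ Set.Ioc (0:ℝ) 1)
    (hanti : AntitoneOn (fun r => r * ρ r) (Set.Ioc (0:ℝ) rs))
    (δ : ℝ) (k : ℤ × ℤ)
    (hlarge : π ≤ rs * (δ * knorm2 k)) :
    π * (∫ r in (rs / Real.sqrt 2)..rs, r * ρ r)
      ≤ δ ^ 2 * lambdaDelta2 ρ δ (knorm2 k) := by
  obtain ⟨hrs0, hrs1⟩ := hrs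
  set g : ℝ → ℝ := fun r => r * ρ r
  set κ := knorm2 k
  set b := rs / √2
  have hg_nonneg : ∀ r ∈ Ioc (0:ℝ) 1, 0 ≤ g r := fun r hr => mul_nonneg hr.1.le (hnonneg r hr)
  have hb0 : 0 < b := by positivity
  have hbrs : b ≤ rs := div_le_self hrs0.le one_lt_sqrt_two.le
  have hδ : δ ≠ 0 := by rintro rfl; linarith [pi_pos, show rs * (0 * κ) = 0 by ring]
  have hlam : δ ^ 2 * lambdaDelta2 ρ δ κ =
      4 * ∫ θ in (0:ℝ)..π / 2, ∫ r in (0:ℝ)..1, g r * (1 - cos (r * δ * κ * cos θ)) := by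
    rw [lambdaDelta2, ← mul_assoc, mul_div_cancel₀ _ (pow_ne_zero 2 hδ)]
  have hθ := le_integral_zero_pi_div_two_of_le_cos (m := fun c => g b * (b - rs / (π * c)))
    (continuous_integral_mul_one_sub_cos hint1 (by fun_prop))
    (fun θ => integral_mul_one_sub_cos_nonneg zero_le_one hg_nonneg _)
    (fun c θ hc hcθ => le_integral_mul_one_sub_cos_of_le_cos hb0 (hbrs.trans hrs1) hint1
      hg_nonneg (hanti.mono (Ioc_subset_Ioc_right hbrs)) hrs0 hlarge hc hcθ)
  have htail := integral_le_mul_sub_of_antitoneOn hbrs (hanti.mono (Icc_subset_Ioc hb0 le_rfl))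
  have hG : 0 ≤ g b * rs := mul_nonneg (hg_nonneg b ⟨hb0, hbrs.trans hrs1⟩) hrs0.le
  rw [hlam]
  calc π * ∫ r in b..rs, g r
      ≤ π * (g b * (rs - b)) := by gcongr
    _ = g b * rs * (π * (1 - 1 / √2)) := by ring
    _ ≤ g b * rs * (4 * (π / 6 * (1 / √2 - 1 / (π * (√3 / 2)))
          + π / 12 * (1 / √2 - 1 / (π * (√2 / 2))))) :=
        mul_le_mul_of_nonneg_left pi_mul_one_sub_inv_sqrt_two_le hG
    _ = 4 * (π / 6 * (g b * (b - rs / (π * (√3 / 2))))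
          + π / 12 * (g b * (b - rs / (π * (√2 / 2))))) := by ring
    _ ≤ _ := by gcongr
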